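/- arXiv:2603.19641 — 9 statements merged into one kernel-verified Lean document; each statement's English description precedes it below -/
import Mathlib

section
/- Let D1 = S̄ - T̄ + δS + δT and D2 = T̄ - S̄ + δS + δT where T̄ > S̄. Then the pair of conditions (max{min{2δR, D1}, min{D2, 2δP}, -max{2δR, D2}, -max{D1, 2δP}} ≥ 0 and min{max{2δR, D1}, max{D2, 2δP}, -min{2δR, D2}, -min{D1, 2δP}} ≤ 0) fails if and only if (δR > 0 and δP > 0 and δS + δT < S̄ - T̄) or (δR < 0 and δP < 0 and δS + δT > T̄ - S̄). -/
/-!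
Write `a = 2δR`, `b = 2δP`, `u = D1`, `v = D2`; then `u ≤ v` because `T̄ > S̄`. Each of the
two inequalities fails exactly on the sign pattern `0 < a, 0 < b, v < 0` or `a < 0, b < 0, 0 < u`:
split on whether `v < 0`, `0 < u`, or `u ≤ 0 ≤ v`; in the last regime the four sign clauses
force `b` (for the max) resp. `a` (for the min) to be both positive and negative.
-/

section SignClauses

variable {α : Type*} [AddCommGroup α] [LinearOrder α] [IsOrderedAddMonoid α] {a b u v : α}

theorem max_min_neg_max_lt_zero_iff (huv : u ≤ v) :
    max (max (min a u) (min v b)) (max (-max a v) (-max u b)) < 0 ↔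
      (0 < a ∧ 0 < b ∧ v < 0) ∨ (a < 0 ∧ b < 0 ∧ 0 < u) := by
  simp only [max_lt_iff, min_lt_iff, neg_lt_zero, lt_max_iff]
  constructor
  · rintro ⟨⟨hau, hvb⟩, hav, hub⟩
    rcases lt_or_ge v 0 with hv | hv
    · exact .inl ⟨hav.resolve_right hv.not_gt, hub.resolve_left (by order), hv⟩
    rcases lt_or_ge 0 u with hu | hu
    · exact .inr ⟨hau.resolve_right hu.not_gt, hvb.resolve_left (by order), hu⟩
    · exact absurd (hub.resolve_left hu.not_gt) (hvb.resolve_left hv.not_gt).not_gt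
  · rintro (⟨ha, hb, hv⟩ | ⟨ha, hb, hu⟩)
    · exact ⟨⟨.inr (by order), .inl hv⟩, .inl ha, .inr hb⟩
    · exact ⟨⟨.inl ha, .inr hb⟩, .inr (by order), .inl hu⟩

theorem zero_lt_min_max_neg_min_iff (huv : u ≤ v) :
    0 < min (min (max a u) (max v b)) (min (-min a v) (-min u b)) ↔
      (0 < a ∧ 0 < b ∧ v < 0) ∨ (a < 0 ∧ b < 0 ∧ 0 < u) := by
  simp only [lt_min_iff, lt_max_iff, neg_pos, min_lt_iff]
  constructor
  · rintro ⟨⟨hau, hvb⟩, hav, hub⟩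
    rcases lt_or_ge v 0 with hv | hv
    · exact .inl ⟨hau.resolve_right (by order), hvb.resolve_left hv.not_gt, hv⟩
    rcases lt_or_ge 0 u with hu | hu
    · exact .inr ⟨hav.resolve_right hv.not_gt, hub.resolve_left (by order), hu⟩
    · exact absurd (hau.resolve_right hu.not_gt) (hav.resolve_right hv.not_gt).not_gt
  · rintro (⟨ha, hb, hv⟩ | ⟨ha, hb, hu⟩)
    · exact ⟨⟨.inl ha, .inr hb⟩, .inr hv, .inl (by order)⟩
    · exact ⟨⟨.inr hu, .inl (by order)⟩, .inl ha, .inr hb⟩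

end SignClauses

/-- Theorem 1 (reduction to reals): the necessary condition for fair ZD strategies
fails iff one of the two sign conditions holds. -/
theorem stmt_0 (Tb Sb dR dS dT dP : ℝ) (hTS : Tb > Sb) :
    ¬ (max (max (min (2*dR) (Sb - Tb + dS + dT)) (min (Tb - Sb + dS + dT) (2*dP)))
          (max (-(max (2*dR) (Tb - Sb + dS + dT))) (-(max (Sb - Tb + dS + dT) (2*dP)))) ≥ 0
        ∧ min (min (max (2*dR) (Sb - Tb + dS + dT)) (max (Tb - Sb + dS + dT) (2*dP)))
          (min (-(min (2*dR) (Tb - Sb + dS + dT))) (-(min (Sb - Tb + dS + dT) (2*dP)))) ≤ 0)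
    ↔ (dR > 0 ∧ dP > 0 ∧ dS + dT < Sb - Tb) ∨ (dR < 0 ∧ dP < 0 ∧ dS + dT > Tb - Sb) := by
  have hD : Sb - Tb + dS + dT ≤ Tb - Sb + dS + dT := by linarith
  rw [not_and_or, not_le, not_le, max_min_neg_max_lt_zero_iff hD,
    zero_lt_min_max_neg_min_iff hD, or_self]
  refine or_congr (and_congr ?_ (and_congr ?_ ?_)) (and_congr ?_ (and_congr ?_ ?_)) <;>
    constructor <;> intro <;> linarith
end

section
/- There exist real numbers T̄, S̄, δR, δS, δT, δP with T̄ > S̄ such that: the necessary condition of Theorem 1 holds (i.e. neither (δR > 0 ∧ δP > 0 ∧ δS + δT < S̄ - T̄) nor (δR < 0 ∧ δP < 0 ∧ δS + δT > T̄ - S̄)) but the necessary-and-sufficient condition of Theorem 2 fails (i.e. neither (S̄ - T̄ + δS + δT ≤ 2·min(δR, δP) ∧ T̄ - S̄ + δS + δT ≥ 2·max(δR, δP)) nor (S̄ - T̄ + δS + δT ≥ 2·min(δR, δP) ∧ T̄ - S̄ + δS + δT ≤ 2·max(δR, δP))). In particular any parameters satisfying δR > 0, δP < 0, S̄ - T̄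 + δS + δT < 2δP, and T̄ - S̄ + δS + δT < 2δR work. -/
/-! With `δR > 0 > δP` neither sign pattern of Theorem 1 can occur. The first alternative of
Theorem 2 needs `T̄ - S̄ + δS + δT ≥ 2 max(δR, δP) ≥ 2 δR`, the second
`S̄ - T̄ + δS + δT ≥ 2 min(δR, δP)`; since `S̄ - T̄ < T̄ - S̄`, the two strict inequalities put
`S̄ - T̄ + δS + δT` below both `2 δP` and `2 δR`, so both alternatives fail.
`T̄ = 1, S̄ = 0, δR = 1, δS = -2, δT = 0, δP = -1` is one such choice. -/

theorem not_same_sign_of_pos_of_neg {Tb Sb dR dS dT dP : ℝ} (hR : 0 < dR) (hP : dP < 0) :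
    ¬ (dR > 0 ∧ dP > 0 ∧ dS + dT < Sb - Tb) ∧ ¬ (dR < 0 ∧ dP < 0 ∧ dS + dT > Tb - Sb) :=
  ⟨fun h => lt_asymm hP h.2.1, fun h => lt_asymm hR h.1⟩

theorem not_min_max_bounds {Tb Sb dR dS dT dP : ℝ} (hST : Sb < Tb)
    (hP : Sb - Tb + dS + dT < 2 * dP) (hR : Tb - Sb + dS + dT < 2 * dR) :
    ¬ (Sb - Tb + dS + dT ≤ 2 * min dR dP ∧ Tb - Sb + dS + dT ≥ 2 * max dR dP) ∧
      ¬ (Sb - Tb + dS + dT ≥ 2 * min dR dP ∧ Tb - Sb + dS + dT ≤ 2 * max dR dP) := by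
  constructor
  · rintro ⟨-, hmax⟩
    linarith [le_max_left dR dP]
  · rintro ⟨hmin, -⟩
    rcases min_choice dR dP with h | h <;> rw [h] at hmin <;> linarith

/-- The necessary condition of Theorem 1 is strictly weaker than the necessary and
sufficient condition of Theorem 2: there are parameters satisfying the former but
not the latter; in particular any parameters with δR > 0, δP < 0,
S̄-T̄+δS+δT < 2δP, T̄-S̄+δS+δT < 2δR work. -/
theorem stmt_3 :
    (∃ Tb Sb dR dS dT dP : ℝ, Tb > Sb ∧
      (¬ (dR > 0 ∧ dP > 0 ∧ dS + dT < Sb - Tb) ∧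
       ¬ (dR < 0 ∧ dP < 0 ∧ dS + dT > Tb - Sb)) ∧
      (¬ (Sb - Tb + dS + dT ≤ 2 * min dR dP ∧ Tb - Sb + dS + dT ≥ 2 * max dR dP) ∧
       ¬ (Sb - Tb + dS + dT ≥ 2 * min dR dP ∧ Tb - Sb + dS + dT ≤ 2 * max dR dP)))
    ∧ (∀ Tb Sb dR dS dT dP : ℝ, Tb > Sb →
        dR > 0 → dP < 0 → Sb - Tb + dS + dT < 2 * dP → Tb - Sb + dS + dT < 2 * dR →
      (¬ (dR > 0 ∧ dP > 0 ∧ dS + dT < Sb - Tb) ∧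
       ¬ (dR < 0 ∧ dP < 0 ∧ dS + dT > Tb - Sb)) ∧
      (¬ (Sb - Tb + dS + dT ≤ 2 * min dR dP ∧ Tb - Sb + dS + dT ≥ 2 * max dR dP) ∧
       ¬ (Sb - Tb + dS + dT ≥ 2 * min dR dP ∧ Tb - Sb + dS + dT ≤ 2 * max dR dP))) := by
  refine ⟨⟨1, 0, 1, -2, 0, -1, by norm_num,
    not_same_sign_of_pos_of_neg (by norm_num) (by norm_num),
    not_min_max_bounds (by norm_num) (by norm_num) (by norm_num)⟩, ?_⟩
  intro Tb Sb dR dS dT dP hST hR hP hminP hmaxR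
  exact ⟨not_same_sign_of_pos_of_neg hR hP, not_min_max_bounds hST hminP hmaxR⟩
end

section
/- Let v₁ = (-1,-1,0,0,1,0,1,0), v₂ = (0,0,-1,-1,0,1,0,1), v₃ = (1,0,1,0,-1,-1,0,0), v₄ = (0,1,0,1,0,0,-1,-1) in ℝ⁸, and let B = (2δR, S̄-T̄+δS+δT, T̄-S̄+δS+δT, 2δP, -2δR, S̄-T̄-δS-δT, T̄-S̄-δS-δT, -2δP) for real numbers T̄ > S̄, δR, δS, δT, δP. If there exist real coefficients c₁, c₂, c₃, c₄ with c₁v₁ + c₂v₂ + c₃v₃ + c₄v₄ = B, then δR + δP = δS + δT. -/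
theorem stmt_5_general (Tb Sb dR dS dT dP : ℝ)
    (h : ∃ c₁ c₂ c₃ c₄ : ℝ,
      c₁ • (![-1,-1,0,0,1,0,1,0] : Fin 8 → ℝ)
        + c₂ • (![0,0,-1,-1,0,1,0,1] : Fin 8 → ℝ)
        + c₃ • (![1,0,1,0,-1,-1,0,0] : Fin 8 → ℝ)
        + c₄ • (![0,1,0,1,0,0,-1,-1] : Fin 8 → ℝ)
      = (![2*dR, Sb - Tb + dS + dT, Tb - Sb + dS + dT, 2*dP,
           -(2*dR), Sb - Tb - dS - dT, Tb - Sb - dS - dT, -(2*dP)] : Fin 8 → ℝ)) :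
    dR + dP = dS + dT := by
  obtain ⟨c₁, c₂, c₃, c₄, h⟩ := h
  -- `x ↦ x₀ - x₁ - x₂ + x₃` kills every `vᵢ` and takes the value `2 (δR + δP - δS - δT)` on `B`.
  have contrast := congrArg (fun x : Fin 8 → ℝ => x 0 - x 1 - x 2 + x 3) h
  simp only [Pi.add_apply, Pi.smul_apply, smul_eq_mul, Matrix.cons_val] at contrast
  linarith

/-- Necessity direction of Theorem 3: if B lies in the span of the TFT Press-Dyson
vectors, then δR + δP = δS + δT. -/
theorem stmt_5 (Tb Sb dR dS dT dP : ℝ) (hTS : Tb > Sb)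
    (h : ∃ c₁ c₂ c₃ c₄ : ℝ,
      c₁ • (![-1,-1,0,0,1,0,1,0] : Fin 8 → ℝ)
        + c₂ • (![0,0,-1,-1,0,1,0,1] : Fin 8 → ℝ)
        + c₃ • (![1,0,1,0,-1,-1,0,0] : Fin 8 → ℝ)
        + c₄ • (![0,1,0,1,0,0,-1,-1] : Fin 8 → ℝ)
      = (![2*dR, Sb - Tb + dS + dT, Tb - Sb + dS + dT, 2*dP,
           -(2*dR), Sb - Tb - dS - dT, Tb - Sb - dS - dT, -(2*dP)] : Fin 8 → ℝ)) :
    dR + dP = dS + dT :=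
  stmt_5_general Tb Sb dR dS dT dP h
end

section
/- Let v₁ = (-1,-1,0,0,1,0,1,0), v₂ = (0,0,-1,-1,0,1,0,1), v₃ = (1,0,1,0,-1,-1,0,0), v₄ = (0,1,0,1,0,0,-1,-1) in ℝ⁸, and let B = (2δR, S̄-T̄+δS+δT, T̄-S̄+δS+δT, 2δP, -2δR, S̄-T̄-δS-δT, T̄-S̄-δS-δT, -2δP). Then there exist real c₁, c₂, c₃, c₄ with c₁v₁ + c₂v₂ + c₃v₃ + c₄v₄ = B if and only if δR + δP = δS + δT. -/
/-!
Writing `c₁ v₁ + c₂ v₂ + c₃ v₃ + c₄ v₄` out coordinatewise gives the differences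
`c₃ - c₁, c₄ - c₁, c₃ - c₂, c₄ - c₂` in the first four coordinates and their negatives in
the last four, and `B` has the same antisymmetric shape. So the question is which `(a, b, c, d)`
are of the form `(c₃ - c₁, c₄ - c₁, c₃ - c₂, c₄ - c₂)`: exactly those with `a + d = b + c`.
For `B` this reads `2δR + 2δP = 2(δS + δT)`.
-/

theorem exists_sub_eq_iff_add_eq_add {G : Type*} [AddCommGroup G] (a b c d : G) :
    (∃ c₁ c₂ c₃ c₄ : G, c₃ - c₁ = a ∧ c₄ - c₁ = b ∧ c₃ - c₂ = c ∧ c₄ - c₂ = d) ↔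
      a + d = b + c := by
  constructor
  · rintro ⟨c₁, c₂, c₃, c₄, rfl, rfl, rfl, rfl⟩
    abel
  · intro h
    refine ⟨0, a - c, a, b, by abel, by abel, by abel, ?_⟩
    rw [sub_sub_eq_add_sub, ← h, add_sub_cancel_left]

theorem tft_combination_eq {R : Type*} [Ring R] (c₁ c₂ c₃ c₄ : R) :
    c₁ • (![-1,-1,0,0,1,0,1,0] : Fin 8 → R)
        + c₂ • (![0,0,-1,-1,0,1,0,1] : Fin 8 → R)
        + c₃ • (![1,0,1,0,-1,-1,0,0] : Fin 8 → R)
        + c₄ • (![0,1,0,1,0,0,-1,-1] : Fin 8 → R) =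
      ![c₃ - c₁, c₄ - c₁, c₃ - c₂, c₄ - c₂,
        -(c₃ - c₁), -(c₃ - c₂), -(c₄ - c₁), -(c₄ - c₂)] := by
  ext i
  fin_cases i <;> simp <;> abel

theorem antisymm_vec_eq_iff {α : Type*} [Neg α] (a b c d a' b' c' d' : α) :
    (![a, b, c, d, -a, -c, -b, -d] : Fin 8 → α) = ![a', b', c', d', -a', -c', -b', -d'] ↔
      a = a' ∧ b = b' ∧ c = c' ∧ d = d' := by
  constructor
  · intro h
    exact ⟨congrFun h 0, congrFun h 1, congrFun h 2, congrFun h 3⟩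
  · rintro ⟨rfl, rfl, rfl, rfl⟩
    rfl

theorem stmt_6_general (Tb Sb dR dS dT dP : ℝ) :
    (∃ c₁ c₂ c₃ c₄ : ℝ,
      c₁ • (![-1,-1,0,0,1,0,1,0] : Fin 8 → ℝ)
        + c₂ • (![0,0,-1,-1,0,1,0,1] : Fin 8 → ℝ)
        + c₃ • (![1,0,1,0,-1,-1,0,0] : Fin 8 → ℝ)
        + c₄ • (![0,1,0,1,0,0,-1,-1] : Fin 8 → ℝ)
      = (![2*dR, Sb - Tb + dS + dT, Tb - Sb + dS + dT, 2*dP,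
           -(2*dR), Sb - Tb - dS - dT, Tb - Sb - dS - dT, -(2*dP)] : Fin 8 → ℝ))
    ↔ dR + dP = dS + dT := by
  rw [show Sb - Tb - dS - dT = -(Tb - Sb + dS + dT) by ring,
    show Tb - Sb - dS - dT = -(Sb - Tb + dS + dT) by ring]
  simp only [tft_combination_eq, antisymm_vec_eq_iff, exists_sub_eq_iff_add_eq_add]
  constructor <;> intro h <;> linarith

/-- Theorem 3: TFT is a fair ZD strategy iff δR + δP = δS + δT. -/
theorem stmt_6 (Tb Sb dR dS dT dP : ℝ) (hTS : Tb > Sb) :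
    (∃ c₁ c₂ c₃ c₄ : ℝ,
      c₁ • (![-1,-1,0,0,1,0,1,0] : Fin 8 → ℝ)
        + c₂ • (![0,0,-1,-1,0,1,0,1] : Fin 8 → ℝ)
        + c₃ • (![1,0,1,0,-1,-1,0,0] : Fin 8 → ℝ)
        + c₄ • (![0,1,0,1,0,0,-1,-1] : Fin 8 → ℝ)
      = (![2*dR, Sb - Tb + dS + dT, Tb - Sb + dS + dT, 2*dP,
           -(2*dR), Sb - Tb - dS - dT, Tb - Sb - dS - dT, -(2*dP)] : Fin 8 → ℝ))
    ↔ dR + dP = dS + dT :=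
  stmt_6_general Tb Sb dR dS dT dP
end

section
/- Let T̄, S̄, δR, δS, δT, δP be real numbers with T̄ > S̄, and set D1 = S̄-T̄+δS+δT, D2 = T̄-S̄+δS+δT. Then the pair of conditions max{min{2δR, D1, -2δR, -D2}, min{D2, 2δP, -D1, -2δP}} ≥ 0 and min{max{2δR, D1, -2δR, -D2}, max{D2, 2δP, -D1, -2δP}} ≤ 0 holds if and only if δR = 0, δP = 0, and |δS + δT| ≤ T̄ - S̄. -/
/-! Since `D2 - D1 = 2 (T̄ - S̄) > 0`, one branch of each condition is infeasible: the `max ≥ 0`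
condition can only hold through its second branch, forcing `δP = 0` and `D1 ≤ 0 ≤ D2`, and the
`min ≤ 0` condition only through its first branch, forcing `δR = 0` and again `D1 ≤ 0 ≤ D2`. -/

lemma zero_le_max_min_iff_of_lt {a b u v : ℝ} (huv : u < v) :
    0 ≤ max (min (min a u) (min (-a) (-v))) (min (min v b) (min (-u) (-b)))
      ↔ b = 0 ∧ u ≤ 0 ∧ 0 ≤ v := by
  simp only [le_max_iff, le_min_iff]
  constructor
  · rintro (⟨⟨-, hu⟩, -, hv⟩ | ⟨⟨hv, hb⟩, hu, hb'⟩)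
    · linarith
    · exact ⟨by linarith, by linarith, hv⟩
  · rintro ⟨rfl, hu, hv⟩
    exact Or.inr ⟨⟨hv, le_rfl⟩, by linarith, by simp⟩

lemma min_max_le_zero_iff_of_lt {a b u v : ℝ} (huv : u < v) :
    min (max (max a u) (max (-a) (-v))) (max (max v b) (max (-u) (-b))) ≤ 0
      ↔ a = 0 ∧ u ≤ 0 ∧ 0 ≤ v := by
  simp only [min_le_iff, max_le_iff]
  constructor
  · rintro (⟨⟨ha, hu⟩, ha', hv⟩ | ⟨⟨hv, -⟩, hu, -⟩)
    · exact ⟨by linarith, hu, by linarith⟩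
    · linarith
  · rintro ⟨rfl, hu, hv⟩
    exact Or.inl ⟨⟨le_rfl, hu⟩, by simp, by linarith⟩

/-- Theorem 4 (reduction to reals): existence of fair partial ZD strategies holds
iff δR = 0, δP = 0, and |δS+δT| ≤ T̄-S̄. -/
theorem stmt_7 (Tb Sb dR dS dT dP : ℝ) (hTS : Tb > Sb) :
    (max (min (min (2*dR) (Sb - Tb + dS + dT)) (min (-(2*dR)) (-(Tb - Sb + dS + dT))))
        (min (min (Tb - Sb + dS + dT) (2*dP)) (min (-(Sb - Tb + dS + dT)) (-(2*dP)))) ≥ 0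
      ∧ min (max (max (2*dR) (Sb - Tb + dS + dT)) (max (-(2*dR)) (-(Tb - Sb + dS + dT))))
        (max (max (Tb - Sb + dS + dT) (2*dP)) (max (-(Sb - Tb + dS + dT)) (-(2*dP)))) ≤ 0)
    ↔ (dR = 0 ∧ dP = 0 ∧ |dS + dT| ≤ Tb - Sb) := by
  have hD : Sb - Tb + dS + dT < Tb - Sb + dS + dT := by linarith
  rw [ge_iff_le, zero_le_max_min_iff_of_lt hD, min_max_le_zero_iff_of_lt hD, abs_le]
  constructor
  · rintro ⟨⟨hP, hD1, hD2⟩, hR, -⟩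
    exact ⟨by linarith, by linarith, by linarith, by linarith⟩
  · rintro ⟨rfl, rfl, hl, hu⟩
    exact ⟨⟨by simp, by linarith, by linarith⟩, by simp, by linarith, by linarith⟩
end

section
/- Suppose in the periodic prisoner's dilemma the payoff-difference vector B = c₁·v(C,σ₁) + c₂·v(C,σ₂) + c_E·e for some constants c₁ ≥ 0, c₂ ≥ 0, c_E ∈ ℝ, where v(C,σ₁), v(C,σ₂) are Press-Dyson vectors built from probabilities in [0,1] and e = (−1,−1,−1,−1,1,1,1,1). Then −c₁ + c₂ − c_E = 2δR, −c_E = 2δP, S̄−T̄+δS+δT ≤ 2·min(δR,δP), and T̄−S̄+δS+δT ≥ 2·max(δR,δP). -/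
/-!
Reading the vector identity coordinatewise gives eight linear equations. Adding the
`R`-coordinates (0 and 4) gives `c₁ (1 - p₁) + c₂ (1 - q₁) = 0` and adding the `P`-coordinates
(3 and 7) gives `c₁ p₄ + c₂ q₄ = 0`; both are sums of nonnegative terms, so `c₂ q₁ = c₂` and
`c₂ q₄ = 0`, which are the two equalities. The `S`- and `T`-coordinates determine `T̄ - S̄` in
three ways, whence `c₂ q₂ + c₁ p₃ = c₁` and `c₂ q₃ + c₁ p₂ = c₂`; with all probabilities in
`[0, 1]` these give the four inequalities of (16).
-/

theorem stmt_14_general (Tb Sb dR dS dT dP : ℝ)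
    (c₁ c₂ cE : ℝ) (hc₁ : c₁ ≥ 0) (hc₂ : c₂ ≥ 0)
    (p₁ p₂ p₃ p₄ q₁ q₂ q₃ q₄ : ℝ)
    (hp₁ : p₁ ∈ Set.Icc (0:ℝ) 1) (hp₂ : p₂ ∈ Set.Icc (0:ℝ) 1)
    (hp₃ : p₃ ∈ Set.Icc (0:ℝ) 1) (hp₄ : p₄ ∈ Set.Icc (0:ℝ) 1)
    (hq₁ : q₁ ∈ Set.Icc (0:ℝ) 1) (hq₂ : q₂ ∈ Set.Icc (0:ℝ) 1)
    (hq₃ : q₃ ∈ Set.Icc (0:ℝ) 1) (hq₄ : q₄ ∈ Set.Icc (0:ℝ) 1)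
    (heq : (![2*dR, Sb - Tb + dS + dT, Tb - Sb + dS + dT, 2*dP,
              -(2*dR), Sb - Tb - dS - dT, Tb - Sb - dS - dT, -(2*dP)] : Fin 8 → ℝ)
      = c₁ • (![-1,-1,0,0,p₁,p₂,p₃,p₄] : Fin 8 → ℝ)
        + c₂ • (![q₁,q₂,q₃,q₄,-1,-1,0,0] : Fin 8 → ℝ)
        + cE • (![-1,-1,-1,-1,1,1,1,1] : Fin 8 → ℝ)) :
    -c₁ + c₂ - cE = 2*dR ∧ -cE = 2*dP
    ∧ Sb - Tb + dS + dT ≤ 2 * min dR dP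
    ∧ Tb - Sb + dS + dT ≥ 2 * max dR dP := by
  simp only [Matrix.smul_cons, Matrix.cons_add_cons, Matrix.vecCons_inj, smul_eq_mul,
    Matrix.smul_empty, Matrix.empty_add_empty, and_true] at heq
  obtain ⟨e₀, e₁, e₂, e₃, e₄, e₅, e₆, e₇⟩ := heq
  have hR : c₂ * (1 - q₁) = 0 :=
    ((add_eq_zero_iff_of_nonneg (mul_nonneg hc₁ (sub_nonneg.2 hp₁.2))
      (mul_nonneg hc₂ (sub_nonneg.2 hq₁.2))).1 (by linarith)).2
  have hP : c₂ * q₄ = 0 :=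
    ((add_eq_zero_iff_of_nonneg (mul_nonneg hc₁ hp₄.1) (mul_nonneg hc₂ hq₄.1)).1
      (by linarith)).2
  have hS : c₂ * q₂ + c₁ * p₃ = c₁ := by linarith
  have hT : c₂ * q₃ + c₁ * p₂ = c₂ := by linarith
  have hq₂c : c₂ * q₂ ≤ c₂ := mul_le_of_le_one_right hc₂ hq₂.2
  have hp₂c : c₁ * p₂ ≤ c₁ := mul_le_of_le_one_right hc₁ hp₂.2
  have hp₃c : 0 ≤ c₁ * p₃ := mul_nonneg hc₁ hp₃.1
  have hq₃c : 0 ≤ c₂ * q₃ := mul_nonneg hc₂ hq₃.1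
  rw [mul_sub, mul_one] at hR
  refine ⟨by linarith, by linarith, ?_, ?_⟩
  · rw [mul_min_of_nonneg _ _ zero_le_two]
    exact le_min (by linarith) (by linarith)
  · rw [mul_max_of_nonneg _ _ zero_le_two]
    exact max_le (by linarith) (by linarith)

/-- Case 1 of the proof of Theorem 2: if B = c₁·v(C,σ₁) + c₂·v(C,σ₂) + c_E·e with
c₁, c₂ ≥ 0 and probabilities in [0,1], the existence condition (16) follows. -/
theorem stmt_14 (Tb Sb dR dS dT dP : ℝ) (hTS : Tb > Sb)
    (c₁ c₂ cE : ℝ) (hc₁ : c₁ ≥ 0) (hc₂ : c₂ ≥ 0)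
    (p₁ p₂ p₃ p₄ q₁ q₂ q₃ q₄ : ℝ)
    (hp₁ : p₁ ∈ Set.Icc (0:ℝ) 1) (hp₂ : p₂ ∈ Set.Icc (0:ℝ) 1)
    (hp₃ : p₃ ∈ Set.Icc (0:ℝ) 1) (hp₄ : p₄ ∈ Set.Icc (0:ℝ) 1)
    (hq₁ : q₁ ∈ Set.Icc (0:ℝ) 1) (hq₂ : q₂ ∈ Set.Icc (0:ℝ) 1)
    (hq₃ : q₃ ∈ Set.Icc (0:ℝ) 1) (hq₄ : q₄ ∈ Set.Icc (0:ℝ) 1)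
    (heq : (![2*dR, Sb - Tb + dS + dT, Tb - Sb + dS + dT, 2*dP,
              -(2*dR), Sb - Tb - dS - dT, Tb - Sb - dS - dT, -(2*dP)] : Fin 8 → ℝ)
      = c₁ • (![-1,-1,0,0,p₁,p₂,p₃,p₄] : Fin 8 → ℝ)
        + c₂ • (![q₁,q₂,q₃,q₄,-1,-1,0,0] : Fin 8 → ℝ)
        + cE • (![-1,-1,-1,-1,1,1,1,1] : Fin 8 → ℝ)) :
    -c₁ + c₂ - cE = 2*dR ∧ -cE = 2*dP
    ∧ Sb - Tb + dS + dT ≤ 2 * min dR dP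
    ∧ Tb - Sb + dS + dT ≥ 2 * max dR dP :=
  stmt_14_general Tb Sb dR dS dT dP c₁ c₂ cE hc₁ hc₂ p₁ p₂ p₃ p₄ q₁ q₂ q₃ q₄ hp₁ hp₂ hp₃ hp₄ hq₁ hq₂
    hq₃ hq₄ heq
end

section
/- Let T̄ > S̄, δR, δS, δT, δP be reals satisfying S̄−T̄+δS+δT ≤ 2·min(δR,δP) and T̄−S̄+δS+δT ≥ 2·max(δR,δP). Choose c₁ = max{T̄−S̄−δS−δT+2δP, T̄−S̄+δS+δT−2δR} and assume c₁ > 0 and c₂ := c₁+2δR−2δP > 0. Then the eight quantities p₁=1, p₄=0, q₁=1, q₄=0, q₂=(S̄−T̄+δS+δT+c₁−2δP)/c₂, q₃=(T̄−S̄+δS+δT−2δP)/c₂, p₂=(S̄−T̄−δS−δT+c₁+2δR)/c₁, p₃=(T̄−S̄−δS−δT+2δP)/c₁ all lie in [0,1], and c₁·(−1,−1,0,0,p₁,p₂,p₃,p₄) + c₂·(q₁,q₂,q₃,q₄,−1,−1,0,0) + (−2δP)·(−1,−1,−1,−1,1,1,1,1) = (2δR, S̄−T̄+δS+δT, T̄−S̄+δS+δT,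 2δP, −2δR, S̄−T̄−δS−δT, T̄−S̄−δS−δT, −2δP). -/
/-!
Each of the four fractions has a nonnegative numerator bounded by its denominator: one of the
two inequalities is one half of (16a) or (16b), the other is one branch of the maximum defining
`c₁` (for the `c₂`-fractions after cancelling `2 dR - 2 dP`). The vector identity is a
coordinatewise ring identity once `c₁ (x / c₁) = x` and `c₂ (y / c₂) = y`.
-/

theorem fairZD_linear_combination_eq {K : Type*} [Field K]
    (Tb Sb dR dS dT dP c₁ c₂ : K) (hc₁ : c₁ ≠ 0) (hc₂def : c₂ = c₁ + 2*dR - 2*dP)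
    (hc₂ : c₂ ≠ 0) :
    c₁ • (![-1, -1, 0, 0, 1,
               (Sb - Tb - dS - dT + c₁ + 2*dR) / c₁,
               (Tb - Sb - dS - dT + 2*dP) / c₁, 0] : Fin 8 → K)
        + c₂ • (![1, (Sb - Tb + dS + dT + c₁ - 2*dP) / c₂,
                 (Tb - Sb + dS + dT - 2*dP) / c₂, 0, -1, -1, 0, 0] : Fin 8 → K)
        + (-(2*dP)) • (![-1,-1,-1,-1,1,1,1,1] : Fin 8 → K)
      = (![2*dR, Sb - Tb + dS + dT, Tb - Sb + dS + dT, 2*dP,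
           -(2*dR), Sb - Tb - dS - dT, Tb - Sb - dS - dT, -(2*dP)] : Fin 8 → K) := by
  simp only [Matrix.smul_cons, smul_eq_mul, Matrix.smul_empty, Matrix.cons_add_cons,
    Matrix.empty_add_empty, mul_div_cancel₀ _ hc₁, mul_div_cancel₀ _ hc₂]
  subst hc₂def
  ring_nf

theorem stmt_15_general (Tb Sb dR dS dT dP : ℝ)
    (h16a : Sb - Tb + dS + dT ≤ 2 * min dR dP)
    (h16b : Tb - Sb + dS + dT ≥ 2 * max dR dP)
    (c₁ c₂ : ℝ)
    (hc₁def : c₁ = max (Tb - Sb - dS - dT + 2*dP) (Tb - Sb + dS + dT - 2*dR))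
    (hc₁ : c₁ > 0) (hc₂def : c₂ = c₁ + 2*dR - 2*dP) (hc₂ : c₂ > 0) :
    ((1:ℝ) ∈ Set.Icc (0:ℝ) 1) ∧ ((0:ℝ) ∈ Set.Icc (0:ℝ) 1)
    ∧ ((1:ℝ) ∈ Set.Icc (0:ℝ) 1) ∧ ((0:ℝ) ∈ Set.Icc (0:ℝ) 1)
    ∧ ((Sb - Tb + dS + dT + c₁ - 2*dP) / c₂ ∈ Set.Icc (0:ℝ) 1)
    ∧ ((Tb - Sb + dS + dT - 2*dP) / c₂ ∈ Set.Icc (0:ℝ) 1)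
    ∧ ((Sb - Tb - dS - dT + c₁ + 2*dR) / c₁ ∈ Set.Icc (0:ℝ) 1)
    ∧ ((Tb - Sb - dS - dT + 2*dP) / c₁ ∈ Set.Icc (0:ℝ) 1)
    ∧ (c₁ • (![-1, -1, 0, 0, 1,
               (Sb - Tb - dS - dT + c₁ + 2*dR) / c₁,
               (Tb - Sb - dS - dT + 2*dP) / c₁, 0] : Fin 8 → ℝ)
        + c₂ • (![1, (Sb - Tb + dS + dT + c₁ - 2*dP) / c₂,
                 (Tb - Sb + dS + dT - 2*dP) / c₂, 0, -1, -1, 0, 0] : Fin 8 → ℝ)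
        + (-(2*dP)) • (![-1,-1,-1,-1,1,1,1,1] : Fin 8 → ℝ)
      = (![2*dR, Sb - Tb + dS + dT, Tb - Sb + dS + dT, 2*dP,
           -(2*dR), Sb - Tb - dS - dT, Tb - Sb - dS - dT, -(2*dP)] : Fin 8 → ℝ)) := by
  have hR : Sb - Tb + dS + dT ≤ 2 * dR := h16a.trans (by gcongr; exact min_le_left _ _)
  have hP : Sb - Tb + dS + dT ≤ 2 * dP := h16a.trans (by gcongr; exact min_le_right _ _)
  have hR' : 2 * dR ≤ Tb - Sb + dS + dT := le_trans (by gcongr; exact le_max_left _ _) h16b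
  have hP' : 2 * dP ≤ Tb - Sb + dS + dT := le_trans (by gcongr; exact le_max_right _ _) h16b
  have hc₁P : Tb - Sb - dS - dT + 2*dP ≤ c₁ := hc₁def ▸ le_max_left _ _
  have hc₁R : Tb - Sb + dS + dT - 2*dR ≤ c₁ := hc₁def ▸ le_max_right _ _
  refine ⟨unitInterval.one_mem, unitInterval.zero_mem, unitInterval.one_mem,
    unitInterval.zero_mem, ?_, ?_, ?_, ?_,
    fairZD_linear_combination_eq Tb Sb dR dS dT dP c₁ c₂ hc₁.ne' hc₂def hc₂.ne'⟩
  all_goals exact unitInterval.div_mem (by linarith) (by linarith) (by linarith)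

/-- Explicit construction of a fair ZD strategy in Case 1 of the proof of Theorem 2. -/
theorem stmt_15 (Tb Sb dR dS dT dP : ℝ) (hTS : Tb > Sb)
    (h16a : Sb - Tb + dS + dT ≤ 2 * min dR dP)
    (h16b : Tb - Sb + dS + dT ≥ 2 * max dR dP)
    (c₁ c₂ : ℝ)
    (hc₁def : c₁ = max (Tb - Sb - dS - dT + 2*dP) (Tb - Sb + dS + dT - 2*dR))
    (hc₁ : c₁ > 0) (hc₂def : c₂ = c₁ + 2*dR - 2*dP) (hc₂ : c₂ > 0) :
    ((1:ℝ) ∈ Set.Icc (0:ℝ) 1) ∧ ((0:ℝ) ∈ Set.Icc (0:ℝ) 1)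
    ∧ ((1:ℝ) ∈ Set.Icc (0:ℝ) 1) ∧ ((0:ℝ) ∈ Set.Icc (0:ℝ) 1)
    ∧ ((Sb - Tb + dS + dT + c₁ - 2*dP) / c₂ ∈ Set.Icc (0:ℝ) 1)
    ∧ ((Tb - Sb + dS + dT - 2*dP) / c₂ ∈ Set.Icc (0:ℝ) 1)
    ∧ ((Sb - Tb - dS - dT + c₁ + 2*dR) / c₁ ∈ Set.Icc (0:ℝ) 1)
    ∧ ((Tb - Sb - dS - dT + 2*dP) / c₁ ∈ Set.Icc (0:ℝ) 1)
    ∧ (c₁ • (![-1, -1, 0, 0, 1,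
               (Sb - Tb - dS - dT + c₁ + 2*dR) / c₁,
               (Tb - Sb - dS - dT + 2*dP) / c₁, 0] : Fin 8 → ℝ)
        + c₂ • (![1, (Sb - Tb + dS + dT + c₁ - 2*dP) / c₂,
                 (Tb - Sb + dS + dT - 2*dP) / c₂, 0, -1, -1, 0, 0] : Fin 8 → ℝ)
        + (-(2*dP)) • (![-1,-1,-1,-1,1,1,1,1] : Fin 8 → ℝ)
      = (![2*dR, Sb - Tb + dS + dT, Tb - Sb + dS + dT, 2*dP,
           -(2*dR), Sb - Tb - dS - dT, Tb - Sb - dS - dT, -(2*dP)] : Fin 8 → ℝ)) :=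
  stmt_15_general Tb Sb dR dS dT dP h16a h16b c₁ c₂ hc₁def hc₁ hc₂def hc₂
end

section
/- Suppose in the periodic prisoner's dilemma the payoff-difference vector B = c₁·v(C,σ₁) + c₂·v(C,σ₂) + c_E·e with c₁ < 0 and c₂ < 0, where v(C,σ₁) = (−1,−1,0,0,p₁,p₂,p₃,p₄), v(C,σ₂) = (q₁,q₂,q₃,q₄,−1,−1,0,0) with pᵢ, qᵢ ∈ [0,1], e = (−1,−1,−1,−1,1,1,1,1), and B = (2δR, S̄−T̄+δS+δT, T̄−S̄+δS+δT, 2δP, −2δR, S̄−T̄−δS−δT, T̄−S̄−δS−δT, −2δP) with T̄ > S̄. Then a contradiction follows; i.e., no such decomposition exists. -/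
/-!
Adding the second and sixth coordinates of the decomposition cancels both `δS + δT` and `c_E`,
leaving `2 (S̄ - T̄) = c₁ (p₂ - 1) + c₂ (q₂ - 1)`. Both products on the right are nonnegative
since `c₁, c₂ < 0` and `p₂, q₂ ≤ 1`, so `S̄ ≥ T̄`.
-/

lemma two_mul_sub_eq_of_decomposition {Tb Sb dR dS dT dP c₁ c₂ cE : ℝ}
    {p₁ p₂ p₃ p₄ q₁ q₂ q₃ q₄ : ℝ}
    (heq : (![2*dR, Sb - Tb + dS + dT, Tb - Sb + dS + dT, 2*dP,
              -(2*dR), Sb - Tb - dS - dT, Tb - Sb - dS - dT, -(2*dP)] : Fin 8 → ℝ)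
      = c₁ • (![-1,-1,0,0,p₁,p₂,p₃,p₄] : Fin 8 → ℝ)
        + c₂ • (![q₁,q₂,q₃,q₄,-1,-1,0,0] : Fin 8 → ℝ)
        + cE • (![-1,-1,-1,-1,1,1,1,1] : Fin 8 → ℝ)) :
    2 * (Sb - Tb) = c₁ * (p₂ - 1) + c₂ * (q₂ - 1) := by
  have h₁ : Sb - Tb + dS + dT = -c₁ + c₂ * q₂ - cE := by
    simpa [sub_eq_add_neg, add_assoc] using congrFun heq 1
  have h₅ : Sb - Tb - dS - dT = c₁ * p₂ - c₂ + cE := by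
    simpa [sub_eq_add_neg, add_assoc] using congrFun heq 5
  linarith

theorem stmt_16_general (Tb Sb dR dS dT dP : ℝ) (hTS : Tb > Sb)
    (c₁ c₂ cE : ℝ) (hc₁ : c₁ < 0) (hc₂ : c₂ < 0)
    (p₁ p₂ p₃ p₄ q₁ q₂ q₃ q₄ : ℝ)
    (hp₂ : p₂ ∈ Set.Icc (0:ℝ) 1)
    (hq₂ : q₂ ∈ Set.Icc (0:ℝ) 1)
    (heq : (![2*dR, Sb - Tb + dS + dT, Tb - Sb + dS + dT, 2*dP,
              -(2*dR), Sb - Tb - dS - dT, Tb - Sb - dS - dT, -(2*dP)] : Fin 8 → ℝ)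
      = c₁ • (![-1,-1,0,0,p₁,p₂,p₃,p₄] : Fin 8 → ℝ)
        + c₂ • (![q₁,q₂,q₃,q₄,-1,-1,0,0] : Fin 8 → ℝ)
        + cE • (![-1,-1,-1,-1,1,1,1,1] : Fin 8 → ℝ)) :
    False := by
  have hp : 0 ≤ c₁ * (p₂ - 1) := mul_nonneg_of_nonpos_of_nonpos hc₁.le (by linarith [hp₂.2])
  have hq : 0 ≤ c₂ * (q₂ - 1) := mul_nonneg_of_nonpos_of_nonpos hc₂.le (by linarith [hq₂.2])
  linarith [two_mul_sub_eq_of_decomposition heq]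

/-- Case 4 of the proof of Theorem 2: no decomposition of B with c₁ < 0 and c₂ < 0
exists. -/
theorem stmt_16 (Tb Sb dR dS dT dP : ℝ) (hTS : Tb > Sb)
    (c₁ c₂ cE : ℝ) (hc₁ : c₁ < 0) (hc₂ : c₂ < 0)
    (p₁ p₂ p₃ p₄ q₁ q₂ q₃ q₄ : ℝ)
    (hp₁ : p₁ ∈ Set.Icc (0:ℝ) 1) (hp₂ : p₂ ∈ Set.Icc (0:ℝ) 1)
    (hp₃ : p₃ ∈ Set.Icc (0:ℝ) 1) (hp₄ : p₄ ∈ Set.Icc (0:ℝ) 1)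
    (hq₁ : q₁ ∈ Set.Icc (0:ℝ) 1) (hq₂ : q₂ ∈ Set.Icc (0:ℝ) 1)
    (hq₃ : q₃ ∈ Set.Icc (0:ℝ) 1) (hq₄ : q₄ ∈ Set.Icc (0:ℝ) 1)
    (heq : (![2*dR, Sb - Tb + dS + dT, Tb - Sb + dS + dT, 2*dP,
              -(2*dR), Sb - Tb - dS - dT, Tb - Sb - dS - dT, -(2*dP)] : Fin 8 → ℝ)
      = c₁ • (![-1,-1,0,0,p₁,p₂,p₃,p₄] : Fin 8 → ℝ)
        + c₂ • (![q₁,q₂,q₃,q₄,-1,-1,0,0] : Fin 8 → ℝ)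
        + cE • (![-1,-1,-1,-1,1,1,1,1] : Fin 8 → ℝ)) :
    False :=
  stmt_16_general Tb Sb dR dS dT dP hTS c₁ c₂ cE hc₁ hc₂ p₁ p₂ p₃ p₄ q₁ q₂ q₃ q₄ hp₂ hq₂ heq
end

section
/- Let T̄, S̄, δS, δT be real numbers with T̄ > S̄, and set D1 = S̄−T̄+δS+δT, D2 = T̄−S̄+δS+δT. Suppose δR = 0. If max{min{0, D1, −D2}, min{D2, 2δP, −D1, −2δP}} ≥ 0 with δP ≠ 0, then D1 ≥ 0 and −D2 ≥ 0, which yields the contradiction S̄ − T̄ ≥ 0. Hence δP ≠ 0 and δR = 0 is impossible for a fair partial ZD strategy. -/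
/-- Case δR = 0, δP ≠ 0 in the proof of Theorem 4: the first max-min inequality
cannot hold. -/
theorem stmt_17 (Tb Sb dS dT dP : ℝ) (hTS : Tb > Sb) (hP : dP ≠ 0) :
    ¬ (max (min (min 0 (Sb - Tb + dS + dT)) (-(Tb - Sb + dS + dT)))
          (min (min (min (Tb - Sb + dS + dT) (2*dP)) (-(Sb - Tb + dS + dT))) (-(2*dP)))
        ≥ 0) := by
  simp only [ge_iff_le, le_max_iff, le_min_iff]
  rintro (⟨⟨-, hD1⟩, hD2⟩ | ⟨⟨⟨-, hP_nonneg⟩, -⟩, hP_nonpos⟩)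
  · -- D1 - D2 = 2 (Sb - Tb)
    linarith
  · exact hP (by linarith)
end
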